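/- Differential operator representation of Gaussian moments in finite dimensions: for a positive semidefinite symmetric n×n matrix C and a polynomial F on ℝⁿ, the Gaussian expectation ∫ F dμ_C equals [exp((1/2)∑_{i,j} C_{ij} ∂ᵢ∂ⱼ) F](0), where the exponential acts as a finite sum on the polynomial F. -/

import Mathlib

/-!
Both sides are linear in `F`, and the powers `(c ⬝ x) ^ k` of linear forms span all polynomials
(polarization: the coefficient of `c ^ s` in `(c ⬝ x) ^ |s|` is a nonzero multinomial times
`x ^ s`), so it suffices to treat `F = (c ⬝ x) ^ k`. On these the heat operator acts as
`(q / 2) d²/dt²` with `q = cᵀ C c`, so `[exp H F](0)` is `(q / 2) ^ m (2m)! / m!` for `k = 2m`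
and `0` for odd `k`. Under `μ`, `c ⬝ x` has law `N(0, q)`, whose moments obey the same formula
by Stein's recursion `E[X ^ (k + 2)] = (k + 1) q E[X ^ k]`.
-/

open MeasureTheory ProbabilityTheory MvPolynomial

noncomputable def heatOperator (n : ℕ) (C : Fin n → Fin n → ℝ)
    (P : MvPolynomial (Fin n) ℝ) : MvPolynomial (Fin n) ℝ :=
  (1 / 2 : ℝ) • ∑ i, ∑ j, C i j • pderiv i (pderiv j P)

open scoped NNReal Nat

section GaussianMoments

variable {μ : ℝ} {v : ℝ≥0}

lemma hasDerivAt_gaussianPDFReal (x : ℝ) :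
    HasDerivAt (gaussianPDFReal μ v) (-((x - μ) / v) * gaussianPDFReal μ v x) x := by
  have h : HasDerivAt (fun x => -(x - μ) ^ 2 / (2 * v)) (-((x - μ) / v)) x := by
    refine ((((hasDerivAt_id x).sub_const μ).pow 2).neg.div_const _).congr_deriv ?_
    simp only [id, Nat.cast_ofNat, mul_one]
    ring
  exact (h.exp.const_mul _).congr_deriv (by rw [gaussianPDFReal]; ring)

lemma integrable_gaussianPDFReal_smul_iff {E : Type*} [NormedAddCommGroup E] [NormedSpace ℝ E]
    (hv : v ≠ 0) {f : ℝ → E} :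
    Integrable (fun x => gaussianPDFReal μ v x • f x) ↔ Integrable f (gaussianReal μ v) := by
  rw [gaussianReal_of_var_ne_zero _ hv, gaussianPDF_def,
    integrable_withDensity_iff_integrable_smul' (by fun_prop) (by simp)]
  simp_rw [ENNReal.toReal_ofReal (gaussianPDFReal_nonneg _ _ _)]

lemma integrable_pow_gaussianReal (k : ℕ) : Integrable (fun x => x ^ k) (gaussianReal μ v) :=
  integrable_pow_of_mem_interior_integrableExpSet (by simp) k

lemma integral_pow_add_two_gaussianReal (k : ℕ) :
    ∫ x, x ^ (k + 2) ∂gaussianReal 0 v = (k + 1) * v * ∫ x, x ^ k ∂gaussianReal 0 v := by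
  rcases eq_or_ne v 0 with rfl | hv
  · simp [gaussianReal_zero_var]
  set p := gaussianPDFReal 0 v
  have hint (j : ℕ) : Integrable (fun x => p x * x ^ j) :=
    (integrable_gaussianPDFReal_smul_iff hv).2 (integrable_pow_gaussianReal j)
  -- Stein's identity: the integral over `ℝ` of this derivative vanishes.
  have hderiv (x : ℝ) : HasDerivAt (fun x => x ^ (k + 1) * p x)
      ((k + 1) * (p x * x ^ k) - (v : ℝ)⁻¹ * (p x * x ^ (k + 2))) x := by
    refine ((hasDerivAt_pow (k + 1) x).mul (hasDerivAt_gaussianPDFReal x)).congr_deriv ?_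
    simp only [Nat.add_sub_cancel, sub_zero, p]
    push_cast
    ring
  have h := integral_eq_zero_of_hasDerivAt_of_integrable hderiv
    (((hint k).const_mul _).sub ((hint (k + 2)).const_mul _))
    (by simpa only [mul_comm] using hint (k + 1))
  rw [integral_sub ((hint k).const_mul _) ((hint (k + 2)).const_mul _), integral_const_mul,
    integral_const_mul, sub_eq_zero] at h
  simp only [integral_gaussianReal_eq_integral_smul hv, smul_eq_mul]
  have hv' : (v : ℝ) ≠ 0 := by exact_mod_cast hv
  field_simp at h
  linear_combination -h

lemma integral_pow_two_mul_gaussianReal (m : ℕ) :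
    ∫ x, x ^ (2 * m) ∂gaussianReal 0 v = (v / 2) ^ m * (2 * m)! / m ! := by
  induction m with
  | zero => simp
  | succ m ih =>
    rw [mul_add_one, integral_pow_add_two_gaussianReal, ih, Nat.factorial_succ,
      Nat.factorial_succ, Nat.factorial_succ]
    push_cast
    field_simp
    ring

lemma integral_pow_two_mul_add_one_gaussianReal (m : ℕ) :
    ∫ x, x ^ (2 * m + 1) ∂gaussianReal 0 v = 0 := by
  induction m with
  | zero => simp
  | succ m ih => rw [mul_add_one, add_right_comm, integral_pow_add_two_gaussianReal, ih, mul_zero]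

end GaussianMoments

section LinearForm

variable {σ R : Type*} [Fintype σ] [CommSemiring R]

noncomputable def linearForm (c : σ → R) : MvPolynomial σ R := ∑ i, c i • X i

lemma eval_linearForm (c x : σ → R) : eval x (linearForm c) = ∑ i, c i * x i := by
  simp [linearForm]

lemma pderiv_linearForm (c : σ → R) (i : σ) : pderiv i (linearForm c) = C (c i) := by
  classical
  simp [linearForm, pderiv_X, Pi.single_apply, smul_eq_C_mul]

lemma pderiv_linearForm_pow (c : σ → R) (i : σ) (k : ℕ) :
    pderiv i (linearForm c ^ k) = (k * c i) • linearForm c ^ (k - 1) := by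
  rw [pderiv_pow, pderiv_linearForm, smul_eq_C_mul, map_mul, map_natCast]
  ring

end LinearForm

section Polarization

variable {σ K : Type*} [Field K]

lemma map_eq_sum_coeff_mul_of_support_subset (ℓ : MvPolynomial σ K →ₗ[K] K)
    {G : MvPolynomial σ K} {T : Finset (σ →₀ ℕ)} (hG : G.support ⊆ T) :
    ℓ G = ∑ t ∈ T, coeff t G * ℓ (monomial t 1) := by
  have hmono (t : σ →₀ ℕ) : ℓ (monomial t (coeff t G)) = coeff t G * ℓ (monomial t 1) := by
    rw [← smul_eq_mul, ← map_smul, smul_monomial, smul_eq_mul, mul_one]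
  conv_lhs => rw [G.as_sum]
  rw [map_sum, ← Finset.sum_subset hG fun t _ ht => by rw [notMem_support_iff.mp ht, zero_mul]]
  exact Finset.sum_congr rfl fun t _ => hmono t

variable [Fintype σ] [CharZero K]

theorem eq_zero_of_forall_map_linearForm_pow_eq_zero (ℓ : MvPolynomial σ K →ₗ[K] K)
    (h : ∀ c d, ℓ (linearForm c ^ d) = 0) : ℓ = 0 := by
  classical
  refine linearMap_ext fun s => LinearMap.ext_ring ?_
  rw [LinearMap.comp_apply, LinearMap.zero_comp, LinearMap.zero_apply]
  set d := s.sum fun _ e => e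
  set T := (Finset.univ : Finset σ).finsuppAntidiag d
  have hT (t : σ →₀ ℕ) : t ∈ T ↔ (t.sum fun _ e => e) = d := by
    simp [T, Finset.mem_finsuppAntidiag, Finsupp.sum_fintype]
  -- The polynomial in `c` whose value at `c` is `ℓ (linearForm c ^ d)`.
  let P : MvPolynomial σ K := ∑ t ∈ T, monomial t (t.multinomial * ℓ (monomial t 1))
  have hP : P = 0 := MvPolynomial.funext fun c => by
    have hsupp : (linearForm c ^ d).support ⊆ T := fun t ht => by
      rw [mem_support_iff, linearForm, coeff_linearCombination_X_pow_of_fintype] at ht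
      exact (hT t).2 (not_not.mp fun h => ht (if_neg h))
    rw [map_zero, ← h c d, map_eq_sum_coeff_mul_of_support_subset ℓ hsupp, map_sum]
    refine Finset.sum_congr rfl fun t ht => ?_
    rw [eval_monomial, linearForm, coeff_linearCombination_X_pow_of_fintype, if_pos ((hT t).1 ht)]
    ring
  have hs := congr_arg (coeff s) hP
  rw [coeff_sum, Finset.sum_eq_single s (fun t _ hts => by rw [coeff_monomial, if_neg hts])
    (fun hs => absurd ((hT s).2 rfl) hs), coeff_monomial, if_pos rfl, coeff_zero] at hs
  have hmult : (s.multinomial : K) ≠ 0 := Nat.cast_ne_zero.mpr (Nat.multinomial_pos _ _).ne'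
  exact (mul_eq_zero.mp hs).resolve_left hmult

theorem span_linearForm_pow_eq_top :
    Submodule.span K (Set.range fun p : (σ → K) × ℕ => linearForm p.1 ^ p.2) = ⊤ := by
  rw [← Submodule.dualAnnihilator_eq_bot_iff, Submodule.eq_bot_iff]
  intro ℓ hℓ
  rw [Submodule.mem_dualAnnihilator] at hℓ
  exact eq_zero_of_forall_map_linearForm_pow_eq_zero ℓ fun c d =>
    hℓ _ (Submodule.subset_span ⟨(c, d), rfl⟩)

end Polarization

section Integrals

variable {σ : Type*} [Fintype σ] {μ : Measure (σ → ℝ)}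

lemma integrable_and_integral_eval_linearForm_pow {ν : Measure ℝ} {c : σ → ℝ}
    (hμ : μ.map (fun x => ∑ i, c i * x i) = ν) {k : ℕ} (hk : Integrable (fun y => y ^ k) ν) :
    Integrable (fun x => eval x (linearForm c ^ k)) μ ∧
      ∫ x, eval x (linearForm c ^ k) ∂μ = ∫ y, y ^ k ∂ν := by
  have hc : Measurable (fun x : σ → ℝ => ∑ i, c i * x i) := by fun_prop
  have hpow : AEStronglyMeasurable (fun y : ℝ => y ^ k) ν := (continuous_pow k).aestronglyMeasurable
  simp only [map_pow, eval_linearForm]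
  subst hμ
  exact ⟨(integrable_map_measure hpow hc.aemeasurable).mp hk,
    (integral_map hc.aemeasurable hpow).symm⟩

theorem integrable_and_integral_eval_eq_of_linearForm_pow (ℓ : MvPolynomial σ ℝ →ₗ[ℝ] ℝ)
    (h : ∀ c k, Integrable (fun x => eval x (linearForm c ^ k)) μ ∧
      ∫ x, eval x (linearForm c ^ k) ∂μ = ℓ (linearForm c ^ k))
    (F : MvPolynomial σ ℝ) :
    Integrable (fun x => eval x F) μ ∧ ∫ x, eval x F ∂μ = ℓ F := by
  have hF : F ∈ Submodule.span ℝ (Set.range fun p : (σ → ℝ) × ℕ => linearForm p.1 ^ p.2) := by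
    rw [span_linearForm_pow_eq_top]
    trivial
  induction hF using Submodule.span_induction with
  | mem _ hP =>
    obtain ⟨⟨c, k⟩, rfl⟩ := hP
    exact h c k
  | zero => simp
  | add P Q _ _ hP hQ =>
    simp only [map_add]
    exact ⟨hP.1.add hQ.1, by rw [integral_add hP.1 hQ.1, hP.2, hQ.2]⟩
  | smul a P _ hP =>
    simp only [smul_eval, map_smul, smul_eq_mul]
    exact ⟨hP.1.const_mul a, by rw [integral_const_mul, hP.2]⟩

end Integrals

lemma totalDegree_pderiv_le {σ R : Type*} [CommSemiring R] (i : σ) (p : MvPolynomial σ R) :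
    (pderiv i p).totalDegree ≤ p.totalDegree - 1 := by
  classical
  refine Finset.sup_le fun m hm => ?_
  have hm' : m + Finsupp.single i 1 ∈ p.support := by
    rw [mem_support_iff, coeff_pderiv] at hm
    exact mem_support_iff.2 (left_ne_zero_of_mul hm)
  have := le_totalDegree hm'
  rw [Finsupp.sum_add_index' (by simp) (by simp), Finsupp.sum_single_index rfl] at this
  omega

section HeatOperator

variable {n : ℕ} (C : Fin n → Fin n → ℝ)

noncomputable def heatOperatorₗ : Module.End ℝ (MvPolynomial (Fin n) ℝ) where
  toFun := heatOperator n C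
  map_add' P Q := by simp only [heatOperator, map_add, smul_add, Finset.sum_add_distrib]
  map_smul' a P := by
    simp only [heatOperator, Derivation.map_smul, Finset.smul_sum, RingHom.id_apply]
    simp only [smul_comm a]

lemma heatOperator_smul (a : ℝ) (P : MvPolynomial (Fin n) ℝ) :
    heatOperator n C (a • P) = a • heatOperator n C P :=
  (heatOperatorₗ C).map_smul a P

lemma iterate_heatOperator_eq_pow_apply (m : ℕ) (P : MvPolynomial (Fin n) ℝ) :
    (heatOperator n C)^[m] P = (heatOperatorₗ C ^ m) P :=
  (Module.End.pow_apply (heatOperatorₗ C) m P).symm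

lemma totalDegree_heatOperator_le (P : MvPolynomial (Fin n) ℝ) :
    (heatOperator n C P).totalDegree ≤ P.totalDegree - 2 := by
  refine (totalDegree_smul_le _ _).trans <| (totalDegree_finsetSum _ _).trans <|
    Finset.sup_le fun i _ => (totalDegree_finsetSum _ _).trans <| Finset.sup_le fun j _ => ?_
  refine (totalDegree_smul_le _ _).trans <| (totalDegree_pderiv_le _ _).trans ?_
  have := totalDegree_pderiv_le j P
  omega

lemma heatOperator_eq_zero_of_totalDegree_le_one {P : MvPolynomial (Fin n) ℝ}
    (hP : P.totalDegree ≤ 1) : heatOperator n C P = 0 := by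
  have h (i j : Fin n) : pderiv i (pderiv j P) = 0 := by
    have := totalDegree_pderiv_le j P
    rw [(totalDegree_eq_zero_iff_eq_C (p := pderiv j P)).mp (by omega), pderiv_C]
  simp [heatOperator, h]

lemma iterate_heatOperator_eq_zero {P : MvPolynomial (Fin n) ℝ} {m : ℕ}
    (hP : P.totalDegree < 2 * m) : (heatOperator n C)^[m] P = 0 := by
  induction m generalizing P with
  | zero => omega
  | succ m ih =>
    rw [Function.iterate_succ_apply]
    by_cases h1 : P.totalDegree ≤ 1
    · rw [heatOperator_eq_zero_of_totalDegree_le_one C h1, iterate_heatOperator_eq_pow_apply,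
        map_zero]
    · exact ih ((totalDegree_heatOperator_le C P).trans_lt (by omega))

lemma heatOperator_linearForm_pow (c : Fin n → ℝ) (k : ℕ) :
    heatOperator n C (linearForm c ^ k) =
      ((∑ i, ∑ j, c i * c j * C i j) / 2 * k.descFactorial 2) • linearForm c ^ (k - 2) := by
  simp only [heatOperator, pderiv_linearForm_pow, Derivation.map_smul, smul_smul,
    ← Finset.sum_smul, Nat.sub_sub]
  congr 1
  rw [Nat.descFactorial_succ, Nat.descFactorial_one, Finset.sum_div, Finset.mul_sum,
    Finset.sum_mul]
  refine Finset.sum_congr rfl fun i _ => ?_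
  rw [Finset.sum_div, Finset.mul_sum, Finset.sum_mul]
  refine Finset.sum_congr rfl fun j _ => ?_
  push_cast
  ring

lemma iterate_heatOperator_linearForm_pow (c : Fin n → ℝ) (k m : ℕ) :
    (heatOperator n C)^[m] (linearForm c ^ k) =
      (((∑ i, ∑ j, c i * c j * C i j) / 2) ^ m * k.descFactorial (2 * m)) •
        linearForm c ^ (k - 2 * m) := by
  induction m with
  | zero => simp
  | succ m ih =>
    have hD : (k - 2 * m).descFactorial 2 * k.descFactorial (2 * m) =
        k.descFactorial (2 * m + 2) := by
      simpa using Nat.descFactorial_mul_descFactorial (n := k) (by omega : 2 * m ≤ 2 * m + 2)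
    rw [Function.iterate_succ_apply', ih, heatOperator_smul, heatOperator_linearForm_pow,
      smul_smul, Nat.sub_sub, mul_add_one, ← hD]
    push_cast
    congr 1
    ring

lemma eval_zero_iterate_heatOperator_linearForm_pow (c : Fin n → ℝ) (k m : ℕ) :
    eval 0 ((heatOperator n C)^[m] (linearForm c ^ k)) =
      if k = 2 * m then ((∑ i, ∑ j, c i * c j * C i j) / 2) ^ m * k ! else 0 := by
  rw [iterate_heatOperator_linearForm_pow, smul_eval, map_pow, eval_linearForm]
  simp only [Pi.zero_apply, mul_zero, Finset.sum_const_zero]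
  split_ifs with hk
  · simp [hk, Nat.descFactorial_self]
  · rcases lt_or_gt_of_ne hk with hlt | hgt
    · simp [Nat.descFactorial_eq_zero_iff_lt.mpr hlt]
    · simp [zero_pow (by omega : k - 2 * m ≠ 0)]

lemma hasSum_heatExp (P : MvPolynomial (Fin n) ℝ) :
    HasSum (fun m => 1 / (m ! : ℝ) * eval 0 ((heatOperator n C)^[m] P))
      (∑ m ∈ Finset.range (P.totalDegree + 1),
        1 / (m ! : ℝ) * eval 0 ((heatOperator n C)^[m] P)) :=
  hasSum_sum_of_ne_finset_zero fun m hm => by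
    rw [iterate_heatOperator_eq_zero C (by simp at hm; omega), map_zero, mul_zero]

noncomputable def heatExpEval : MvPolynomial (Fin n) ℝ →ₗ[ℝ] ℝ where
  toFun P := ∑' m, 1 / (m ! : ℝ) * eval 0 ((heatOperator n C)^[m] P)
  map_add' P Q := by
    rw [← (hasSum_heatExp C P).summable.tsum_add (hasSum_heatExp C Q).summable]
    simp only [iterate_heatOperator_eq_pow_apply, map_add, mul_add]
  map_smul' a P := by
    simp only [iterate_heatOperator_eq_pow_apply, map_smul, smul_eval, RingHom.id_apply,
      smul_eq_mul, mul_left_comm _ a]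
    exact tsum_mul_left

lemma heatExpEval_apply (P : MvPolynomial (Fin n) ℝ) :
    heatExpEval C P = ∑' m, 1 / (m ! : ℝ) * eval 0 ((heatOperator n C)^[m] P) :=
  rfl

lemma heatExpEval_eq_sum_range (P : MvPolynomial (Fin n) ℝ) :
    heatExpEval C P = ∑ m ∈ Finset.range (P.totalDegree + 1),
      1 / (m ! : ℝ) * eval 0 ((heatOperator n C)^[m] P) :=
  (hasSum_heatExp C P).tsum_eq

lemma heatExpEval_linearForm_pow_two_mul (c : Fin n → ℝ) (m : ℕ) :
    heatExpEval C (linearForm c ^ (2 * m)) =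
      ((∑ i, ∑ j, c i * c j * C i j) / 2) ^ m * (2 * m)! / m ! := by
  rw [heatExpEval_apply, tsum_eq_single m fun m' hm' => by
    rw [eval_zero_iterate_heatOperator_linearForm_pow, if_neg (by omega), mul_zero],
    eval_zero_iterate_heatOperator_linearForm_pow, if_pos rfl]
  ring

lemma heatExpEval_linearForm_pow_two_mul_add_one (c : Fin n → ℝ) (m : ℕ) :
    heatExpEval C (linearForm c ^ (2 * m + 1)) = 0 :=
  (tsum_congr fun m' => by
    rw [eval_zero_iterate_heatOperator_linearForm_pow, if_neg (by omega), mul_zero]).trans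
    tsum_zero

lemma heatExpEval_linearForm_pow (c : Fin n → ℝ) {v : ℝ≥0}
    (hv : (v : ℝ) = ∑ i, ∑ j, c i * c j * C i j) (k : ℕ) :
    heatExpEval C (linearForm c ^ k) = ∫ x, x ^ k ∂gaussianReal 0 v := by
  obtain ⟨m, rfl | rfl⟩ := Nat.even_or_odd' k
  · rw [heatExpEval_linearForm_pow_two_mul, integral_pow_two_mul_gaussianReal, hv]
  · rw [heatExpEval_linearForm_pow_two_mul_add_one, integral_pow_two_mul_add_one_gaussianReal]

end HeatOperator

theorem gaussian_moment_diff_op_general (n : ℕ) (C : Fin n → Fin n → ℝ)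
    (hpsd : ∀ c : Fin n → ℝ, 0 ≤ ∑ i, ∑ j, c i * c j * C i j)
    (μ : Measure (Fin n → ℝ))
    (hμ : ∀ c : Fin n → ℝ,
      Measure.map (fun x => ∑ i, c i * x i) μ =
        gaussianReal 0 (∑ i, ∑ j, c i * c j * C i j).toNNReal)
    (F : MvPolynomial (Fin n) ℝ) :
    (∫ x, eval x F ∂μ) =
      ∑ m ∈ Finset.range (F.totalDegree + 1),
        (1 / (m.factorial : ℝ)) * eval (0 : Fin n → ℝ) ((heatOperator n C)^[m] F) := by
  have hlin (c : Fin n → ℝ) (k : ℕ) : Integrable (fun x => eval x (linearForm c ^ k)) μ ∧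
      ∫ x, eval x (linearForm c ^ k) ∂μ = heatExpEval C (linearForm c ^ k) := by
    rw [heatExpEval_linearForm_pow C c (Real.coe_toNNReal _ (hpsd c))]
    exact integrable_and_integral_eval_linearForm_pow (hμ c) (integrable_pow_gaussianReal k)
  rw [(integrable_and_integral_eval_eq_of_linearForm_pow _ hlin F).2, heatExpEval_eq_sum_range]

/-- Differential operator representation of Gaussian moments: for a positive
semidefinite symmetric matrix `C`, a centered Gaussian probability measure `μ` on `ℝⁿ`
with covariance `C` (characterized by its one-dimensional marginals), and a polynomial
`F`, the expectation `∫ F dμ` equals `[exp((1/2) ∑_{i,j} C_{ij} ∂ᵢ∂ⱼ) F](0)`, where the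
exponential acts as a finite sum (only terms up to the total degree of `F` survive). -/
theorem gaussian_moment_diff_op (n : ℕ) (C : Fin n → Fin n → ℝ)
    (hsymm : ∀ i j, C i j = C j i)
    (hpsd : ∀ c : Fin n → ℝ, 0 ≤ ∑ i, ∑ j, c i * c j * C i j)
    (μ : Measure (Fin n → ℝ)) [IsProbabilityMeasure μ]
    (hμ : ∀ c : Fin n → ℝ,
      Measure.map (fun x => ∑ i, c i * x i) μ =
        gaussianReal 0 (∑ i, ∑ j, c i * c j * C i j).toNNReal)
    (F : MvPolynomial (Fin n) ℝ) :
    (∫ x, eval x F ∂μ) =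
      ∑ m ∈ Finset.range (F.totalDegree + 1),
        (1 / (m.factorial : ℝ)) * eval (0 : Fin n → ℝ) ((heatOperator n C)^[m] F) :=
  gaussian_moment_diff_op_general n C hpsd μ hμ F
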